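/- arXiv:2403.18398 — 3 statements merged into one kernel-verified Lean document; each statement's English description precedes it below -/
import Mathlib

section
/- For every time horizon T ∈ ℕ, the projected LMS parameter estimates satisfy the cumulative prediction-error bound Σ_{k=0}^{T} ‖D_k(θ* − θ̂_k)‖² ≤ (1/μ)‖θ̂_0 − θ*‖² + Σ_{k=0}^{T} ‖w_k‖², where ‖·‖ denotes the Euclidean norm. -/
/-!
Projecting onto a convex set that contains `θ*` does not increase the distance to `θ*`, so it
suffices to control the unprojected LMS step. With `e = θ* - θ̂ₖ` and `p = Dₖ e + wₖ`, that step
changes `‖θ̂ - θ*‖²` by `-2μ⟪Dₖ e, p⟫ + μ²‖Dₖᵀ p‖² ≤ -2μ⟪Dₖ e, p⟫ + μ‖p‖² = -μ‖Dₖ e‖² + μ‖wₖ‖²`,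
using `μ‖Dₖ‖² ≤ 1`. Summing over `k`, the terms `‖θ̂ₖ - θ*‖² / μ` telescope.
-/

open Matrix Finset

/-- Euclidean norm of a vector in `ℝ^n`. -/
noncomputable def vnorm {n : ℕ} (v : Fin n → ℝ) : ℝ := Real.sqrt (∑ i, v i ^ 2)

/-- Spectral norm (ℓ²-operator norm) of a matrix. -/
noncomputable def specNorm {n d : ℕ} (D : Matrix (Fin n) (Fin d) ℝ) : ℝ :=
  ‖LinearMap.toContinuousLinearMap (Matrix.toEuclideanLin D)‖

open scoped InnerProduct RealInnerProductSpace

theorem sum_range_le_of_le_sub_add {V a b : ℕ → ℝ} (hV : ∀ k, 0 ≤ V k)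
    (h : ∀ k, V (k + 1) + a k ≤ V k + b k) (N : ℕ) :
    ∑ k ∈ range N, a k ≤ V 0 + ∑ k ∈ range N, b k := by
  have hsum := sum_le_sum fun k (_ : k ∈ range N) => h k
  rw [sum_add_distrib, sum_add_distrib] at hsum
  linarith [sum_range_succ' V N, sum_range_succ V N, hV N]

section Projection

variable {E : Type*} [NormedAddCommGroup E] [InnerProductSpace ℝ E]

theorem Convex.norm_sub_le_of_isMinOn_norm_sub {K : Set E} (hK : Convex ℝ K) {x y z : E}
    (hy : y ∈ K) (hz : z ∈ K) (hmin : IsMinOn (fun v => ‖v - x‖) K y) :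
    ‖y - z‖ ≤ ‖x - z‖ := by
  have : Nonempty K := ⟨⟨y, hy⟩⟩
  have hinf : ‖x - y‖ = ⨅ v : K, ‖x - v‖ := by
    have hbdd : BddBelow (Set.range fun v : K => ‖x - v‖) :=
      ⟨0, by rintro _ ⟨v, rfl⟩; exact norm_nonneg _⟩
    refine le_antisymm (le_ciInf fun v => ?_) (ciInf_le hbdd ⟨y, hy⟩)
    rw [norm_sub_rev x y, norm_sub_rev x v]
    exact hmin v.2
  have hobtuse : ⟪x - y, z - y⟫ ≤ 0 := (norm_eq_iInf_iff_real_inner_le_zero hK hy).1 hinf z hz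
  have hpyth : ‖x - z‖ ^ 2 = ‖x - y‖ ^ 2 - 2 * ⟪x - y, z - y⟫ + ‖y - z‖ ^ 2 := by
    rw [← sub_add_sub_cancel x y z, norm_add_sq_real, ← neg_sub z y, inner_neg_right]
    ring
  refine (pow_le_pow_iff_left₀ (norm_nonneg _) (norm_nonneg _) two_ne_zero).1 ?_
  linarith [sq_nonneg ‖x - y‖]

end Projection

section LMS

variable {E F : Type*} [NormedAddCommGroup E] [InnerProductSpace ℝ E] [CompleteSpace E]
  [NormedAddCommGroup F] [InnerProductSpace ℝ F] [CompleteSpace F]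

theorem norm_lms_update_sub_sq_le {μ : ℝ} (hμ : 0 ≤ μ) (A : E →L[ℝ] F) (hA : μ * ‖A‖ ^ 2 ≤ 1)
    (θ x : E) (w : F) :
    ‖x + μ • (A†) (A (θ - x) + w) - θ‖ ^ 2 ≤
      ‖x - θ‖ ^ 2 - μ * ‖A (θ - x)‖ ^ 2 + μ * ‖w‖ ^ 2 := by
  set e := θ - x
  set p := A e + w
  have hexpand : ‖x + μ • (A†) p - θ‖ ^ 2 = ‖e‖ ^ 2 - 2 * μ * ⟪A e, p⟫ + μ ^ 2 * ‖(A†) p‖ ^ 2 := by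
    rw [show x + μ • (A†) p - θ = -e + μ • (A†) p by simp only [e]; abel, norm_add_sq_real,
      inner_smul_right, inner_neg_left, ContinuousLinearMap.adjoint_inner_right, norm_smul,
      norm_neg, Real.norm_of_nonneg hμ]
    ring
  have hadjoint : μ ^ 2 * ‖(A†) p‖ ^ 2 ≤ μ * ‖p‖ ^ 2 := by
    have hle : ‖(A†) p‖ ≤ ‖A‖ * ‖p‖ := by
      simpa only [LinearIsometryEquiv.norm_map] using (A†).le_opNorm p
    calc μ ^ 2 * ‖(A†) p‖ ^ 2 ≤ μ * (μ * ‖A‖ ^ 2) * ‖p‖ ^ 2 := by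
          rw [show μ * (μ * ‖A‖ ^ 2) * ‖p‖ ^ 2 = μ ^ 2 * (‖A‖ * ‖p‖) ^ 2 by ring]
          gcongr
      _ ≤ μ * 1 * ‖p‖ ^ 2 := by gcongr
      _ = μ * ‖p‖ ^ 2 := by ring
  have hp : ‖p‖ ^ 2 = ‖A e‖ ^ 2 + 2 * ⟪A e, w⟫ + ‖w‖ ^ 2 := norm_add_sq_real _ _
  have hinner : ⟪A e, p⟫ = ‖A e‖ ^ 2 + ⟪A e, w⟫ := by
    rw [inner_add_right, real_inner_self_eq_norm_sq]
  rw [hexpand, hinner, norm_sub_rev x θ]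
  rw [hp] at hadjoint
  linarith

theorem projected_lms_sum_norm_sq_le {K : Set E} (hK : Convex ℝ K) {θ : E} (hθ : θ ∈ K)
    {μ : ℝ} (hμ : 0 < μ) (A : ℕ → E →L[ℝ] F) (hA : ∀ k, μ * ‖A k‖ ^ 2 ≤ 1) (w : ℕ → F)
    (x y : ℕ → E) (hy : ∀ k, y (k + 1) = x k + μ • ((A k)†) (A k (θ - x k) + w k))
    (hx_mem : ∀ k, x (k + 1) ∈ K) (hx_min : ∀ k, IsMinOn (fun v => ‖v - y (k + 1)‖) K (x (k + 1)))
    (N : ℕ) :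
    ∑ k ∈ range N, ‖A k (θ - x k)‖ ^ 2 ≤ 1 / μ * ‖x 0 - θ‖ ^ 2 + ∑ k ∈ range N, ‖w k‖ ^ 2 := by
  refine sum_range_le_of_le_sub_add (V := fun k => 1 / μ * ‖x k - θ‖ ^ 2) (fun k => by positivity)
    (fun k => ?_) N
  have hproj : ‖x (k + 1) - θ‖ ≤ ‖y (k + 1) - θ‖ :=
    hK.norm_sub_le_of_isMinOn_norm_sub (hx_mem k) hθ (hx_min k)
  have hstep := norm_lms_update_sub_sq_le hμ.le (A k) (hA k) θ (x k) (w k)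
  rw [← hy k] at hstep
  have hsq := pow_le_pow_left₀ (norm_nonneg _) hproj 2
  rw [← mul_le_mul_iff_of_pos_left hμ]
  field_simp
  linarith

end LMS

theorem vnorm_eq_norm_toLp {n : ℕ} (v : Fin n → ℝ) : vnorm v = ‖WithLp.toLp 2 v‖ := by
  simp [vnorm, EuclideanSpace.norm_eq]

theorem adjoint_toContinuousLinearMap_toEuclideanLin {m n : Type*} [Fintype m] [Fintype n]
    [DecidableEq m] [DecidableEq n] (D : Matrix m n ℝ) :
    (toEuclideanLin D).toContinuousLinearMap† = (toEuclideanLin Dᵀ).toContinuousLinearMap := by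
  rw [← LinearMap.adjoint_toContinuousLinearMap, ← toEuclideanLin_conjTranspose_eq_adjoint,
    conjTranspose_eq_transpose_of_trivial]

theorem lms_cumulative_prediction_error_bound_general
    {d n : ℕ}
    (Θ : Set (Fin d → ℝ)) (hΘconv : Convex ℝ Θ)
    (θstar : Fin d → ℝ) (hθstar : θstar ∈ Θ)
    (μ : ℝ) (hμ : 0 < μ)
    (D : ℕ → Matrix (Fin n) (Fin d) ℝ) (hD : ∀ k, μ * specNorm (D k) ^ 2 ≤ 1)
    (w : ℕ → (Fin n → ℝ))
    (θhat θtil : ℕ → (Fin d → ℝ))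
    (hupd : ∀ k, θtil (k + 1) =
      θhat k + μ • (D k)ᵀ.mulVec ((D k).mulVec (θstar - θhat k) + w k))
    (hproj_mem : ∀ k, θhat (k + 1) ∈ Θ)
    (hproj : ∀ k, ∀ θ ∈ Θ, vnorm (θhat (k + 1) - θtil (k + 1)) ≤ vnorm (θ - θtil (k + 1))) :
    ∀ T : ℕ,
      ∑ k ∈ Finset.range (T + 1), vnorm ((D k).mulVec (θstar - θhat k)) ^ 2 ≤
        (1 / μ) * vnorm (θhat 0 - θstar) ^ 2 + ∑ k ∈ Finset.range (T + 1), vnorm (w k) ^ 2 := by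
  intro T
  let A k := (toEuclideanLin (D k)).toContinuousLinearMap
  have hupd_euclid : ∀ k, WithLp.toLp 2 (θtil (k + 1)) = WithLp.toLp 2 (θhat k) +
      μ • ((A k)†) (A k (WithLp.toLp 2 θstar - WithLp.toLp 2 (θhat k)) + WithLp.toLp 2 (w k)) := by
    intro k
    rw [hupd k, adjoint_toContinuousLinearMap_toEuclideanLin]
    rfl
  have hmin : ∀ k, IsMinOn (fun v => ‖v - WithLp.toLp 2 (θtil (k + 1))‖) (WithLp.ofLp ⁻¹' Θ)
      (WithLp.toLp 2 (θhat (k + 1))) :=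
    fun k => isMinOn_iff.2 fun v hv => by simpa [vnorm_eq_norm_toLp] using hproj k _ hv
  simp only [vnorm_eq_norm_toLp, WithLp.toLp_sub]
  exact projected_lms_sum_norm_sq_le
    (hΘconv.linear_preimage (WithLp.linearEquiv 2 ℝ (Fin d → ℝ)).toLinearMap) hθstar hμ A hD
    (fun k => WithLp.toLp 2 (w k)) (fun k => WithLp.toLp 2 (θhat k))
    (fun k => WithLp.toLp 2 (θtil k)) hupd_euclid hproj_mem hmin (T + 1)

/-- cumulative prediction-error bound of projected LMS. -/
theorem lms_cumulative_prediction_error_bound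
    {d n : ℕ} (hd : 1 ≤ d) (hn : 1 ≤ n)
    (Θ : Set (Fin d → ℝ)) (hΘne : Θ.Nonempty) (hΘcomp : IsCompact Θ) (hΘconv : Convex ℝ Θ)
    (θstar : Fin d → ℝ) (hθstar : θstar ∈ Θ)
    (μ : ℝ) (hμ : 0 < μ)
    (D : ℕ → Matrix (Fin n) (Fin d) ℝ) (hD : ∀ k, μ * specNorm (D k) ^ 2 ≤ 1)
    (w : ℕ → (Fin n → ℝ))
    (θhat θtil : ℕ → (Fin d → ℝ))
    (hθ0 : θhat 0 ∈ Θ)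
    (hupd : ∀ k, θtil (k + 1) =
      θhat k + μ • (D k)ᵀ.mulVec ((D k).mulVec (θstar - θhat k) + w k))
    (hproj_mem : ∀ k, θhat (k + 1) ∈ Θ)
    (hproj : ∀ k, ∀ θ ∈ Θ, vnorm (θhat (k + 1) - θtil (k + 1)) ≤ vnorm (θ - θtil (k + 1))) :
    ∀ T : ℕ,
      ∑ k ∈ Finset.range (T + 1), vnorm ((D k).mulVec (θstar - θhat k)) ^ 2 ≤
        (1 / μ) * vnorm (θhat 0 - θstar) ^ 2 + ∑ k ∈ Finset.range (T + 1), vnorm (w k) ^ 2 :=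
  lms_cumulative_prediction_error_bound_general Θ hΘconv θstar hθstar μ hμ D hD w θhat θtil hupd
    hproj_mem hproj
end

section
/- Under the stated terminal cost design conditions, the terminal cost ℓ_f(x) = xᵀP_f x + pᵀx satisfies, for every x ∈ ℝ^n, the decrease condition ℓ_f(Ax) − ℓ_f(x) ≤ −(xᵀQx + qᵀx + s(x)ᵀΛ s(x)), where s(x) = max{Hx − h, 0} (componentwise maximum). -/
/-!
Apply the LMI to `x`: the quadratic part of `ℓ_f(Ax) - ℓ_f(x)` is at most
`-(xᵀQx + (Hx)ᵀΛ(Hx))`. The choice `p = (I - A)⁻ᵀ q` makes the linear part telescope to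
`pᵀ(A - I)x = -qᵀx`. Finally, since `h ≥ 0` and `Λ` is diagonal with positive entries,
`0 ≤ s(x)ᵢ ≤ |(Hx)ᵢ|` gives `s(x)ᵀΛ s(x) ≤ (Hx)ᵀΛ(Hx)`.
-/

namespace Matrix

variable {m n R : Type*} [Fintype m] [Fintype n]

theorem dotProduct_transpose_mul_mul_mulVec [CommSemiring R] (B : Matrix m n R)
    (M : Matrix m m R) (x : n → R) :
    x ⬝ᵥ ((Bᵀ * M * B) *ᵥ x) = (B *ᵥ x) ⬝ᵥ (M *ᵥ (B *ᵥ x)) := by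
  rw [← mulVec_mulVec, ← mulVec_mulVec, dotProduct_mulVec, vecMul_transpose]

theorem dotProduct_sub_dotProduct_mulVec_of_isUnit [CommRing R] [DecidableEq n]
    {A : Matrix n n R} (hA : IsUnit (1 - A)) (q x : n → R) :
    ((1 - A)⁻¹)ᵀ *ᵥ q ⬝ᵥ x - ((1 - A)⁻¹)ᵀ *ᵥ q ⬝ᵥ (A *ᵥ x) = q ⬝ᵥ x := by
  have hq : (1 - A)ᵀ *ᵥ (((1 - A)⁻¹)ᵀ *ᵥ q) = q := by
    rw [mulVec_mulVec, ← transpose_mul, nonsing_inv_mul _ ((isUnit_iff_isUnit_det _).mp hA),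
      transpose_one, one_mulVec]
  rw [← dotProduct_sub, ← one_mulVec x, mulVec_mulVec, mul_one, ← sub_mulVec, dotProduct_mulVec,
    ← mulVec_transpose, hq, one_mulVec]

theorem IsDiag.dotProduct_mulVec_eq_sum [CommSemiring R] [DecidableEq n] {D : Matrix n n R}
    (hD : D.IsDiag) (v : n → R) : v ⬝ᵥ (D *ᵥ v) = ∑ i, D i i * v i ^ 2 := by
  rw [← hD.diagonal_diag, dotProduct]
  refine Finset.sum_congr rfl fun i _ => ?_
  rw [mulVec_diagonal, diagonal_apply_eq]
  ring

theorem IsDiag.dotProduct_mulVec_le_of_sq_le [CommSemiring R] [PartialOrder R] [IsOrderedRing R]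
    [DecidableEq n] {D : Matrix n n R} (hD : D.IsDiag) (hD₀ : ∀ i, 0 ≤ D i i) {u v : n → R}
    (huv : ∀ i, u i ^ 2 ≤ v i ^ 2) : u ⬝ᵥ (D *ᵥ u) ≤ v ⬝ᵥ (D *ᵥ v) := by
  rw [hD.dotProduct_mulVec_eq_sum, hD.dotProduct_mulVec_eq_sum]
  exact Finset.sum_le_sum fun i _ => mul_le_mul_of_nonneg_left (huv i) (hD₀ i)

end Matrix

open Matrix

theorem sq_max_sub_zero_le {R : Type*} [CommRing R] [LinearOrder R] [IsStrictOrderedRing R]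
    {a b : R} (hb : 0 ≤ b) : max (a - b) 0 ^ 2 ≤ a ^ 2 := by
  rcases le_total (a - b) 0 with hab | hab
  · rw [max_eq_right hab, zero_pow two_ne_zero]
    exact sq_nonneg a
  · rw [max_eq_left hab]
    exact pow_le_pow_left₀ hab (sub_le_self a hb) 2

theorem terminal_cost_decrease_general
    {n c : ℕ}
    (Q : Matrix (Fin n) (Fin n) ℝ)
    (q : Fin n → ℝ)
    (H : Matrix (Fin c) (Fin n) ℝ) (h : Fin c → ℝ) (hh : ∀ i, 0 ≤ h i)
    (Λ : Matrix (Fin c) (Fin c) ℝ) (hΛdiag : ∀ i j, i ≠ j → Λ i j = 0) (hΛ : Λ.PosDef)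
    (A : Matrix (Fin n) (Fin n) ℝ) (hA : IsUnit (1 - A))
    (Pf : Matrix (Fin n) (Fin n) ℝ)
    (hLMI : (Pf - Aᵀ * Pf * A - (Q + Hᵀ * Λ * H)).PosSemidef)
    (p : Fin n → ℝ) (hp : p = ((1 - A)⁻¹)ᵀ.mulVec q)
    (ℓf : (Fin n → ℝ) → ℝ)
    (hℓf : ∀ x, ℓf x = x ⬝ᵥ Pf.mulVec x + p ⬝ᵥ x)
    (s : (Fin n → ℝ) → (Fin c → ℝ))
    (hs : ∀ x i, s x i = max (H.mulVec x i - h i) 0) :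
    ∀ x : Fin n → ℝ,
      ℓf (A.mulVec x) - ℓf x ≤ -(x ⬝ᵥ Q.mulVec x + q ⬝ᵥ x + s x ⬝ᵥ Λ.mulVec (s x)) := by
  intro x
  have hquad : 0 ≤ x ⬝ᵥ (Pf *ᵥ x) - (A *ᵥ x) ⬝ᵥ (Pf *ᵥ (A *ᵥ x)) - x ⬝ᵥ (Q *ᵥ x)
      - (H *ᵥ x) ⬝ᵥ (Λ *ᵥ (H *ᵥ x)) := by
    simpa only [star_trivial, sub_mulVec, add_mulVec, dotProduct_sub, dotProduct_add,
      dotProduct_transpose_mul_mul_mulVec, sub_add_eq_sub_sub] using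
      hLMI.dotProduct_mulVec_nonneg x
  have hlin : p ⬝ᵥ x - p ⬝ᵥ (A *ᵥ x) = q ⬝ᵥ x :=
    hp ▸ dotProduct_sub_dotProduct_mulVec_of_isUnit hA q x
  have hpen : s x ⬝ᵥ (Λ *ᵥ s x) ≤ (H *ᵥ x) ⬝ᵥ (Λ *ᵥ (H *ᵥ x)) :=
    IsDiag.dotProduct_mulVec_le_of_sq_le (fun i j => hΛdiag i j)
      (fun _ => hΛ.posSemidef.diag_nonneg) fun i => hs x i ▸ sq_max_sub_zero_le (hh i)
  rw [hℓf, hℓf]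
  linarith

/-- terminal cost decrease condition. -/
theorem terminal_cost_decrease
    {n c : ℕ} (hn : 1 ≤ n) (hc : 1 ≤ c)
    (Q : Matrix (Fin n) (Fin n) ℝ) (hQ : Q.PosSemidef)
    (q : Fin n → ℝ)
    (H : Matrix (Fin c) (Fin n) ℝ) (h : Fin c → ℝ) (hh : ∀ i, 0 ≤ h i)
    (Λ : Matrix (Fin c) (Fin c) ℝ) (hΛdiag : ∀ i j, i ≠ j → Λ i j = 0) (hΛ : Λ.PosDef)
    (A : Matrix (Fin n) (Fin n) ℝ) (hA : IsUnit (1 - A))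
    (Pf : Matrix (Fin n) (Fin n) ℝ) (hPf : Pf.PosDef)
    (hLMI : (Pf - Aᵀ * Pf * A - (Q + Hᵀ * Λ * H)).PosSemidef)
    (p : Fin n → ℝ) (hp : p = ((1 - A)⁻¹)ᵀ.mulVec q)
    (ℓf : (Fin n → ℝ) → ℝ)
    (hℓf : ∀ x, ℓf x = x ⬝ᵥ Pf.mulVec x + p ⬝ᵥ x)
    (s : (Fin n → ℝ) → (Fin c → ℝ))
    (hs : ∀ x i, s x i = max (H.mulVec x i - h i) 0) :
    ∀ x : Fin n → ℝ,
      ℓf (A.mulVec x) - ℓf x ≤ -(x ⬝ᵥ Q.mulVec x + q ⬝ᵥ x + s x ⬝ᵥ Λ.mulVec (s x)) :=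
  terminal_cost_decrease_general Q q H h hh Λ hΛdiag hΛ A hA Pf hLMI p hp ℓf hℓf s hs
end

section
/- Let θ̂, θ', θ* ∈ ℝ^d, x ∈ ℝ^n, w ∈ ℝ^n, and inputs u_0, u_1, …, u_N ∈ ℝ^m. Define the nominal trajectory x̂*_0 = x, x̂*_{j+1} = A(θ̂)x̂*_j + B(θ̂)u_j for 0 ≤ j ≤ N−1, and the shifted candidate trajectory ŷ_0 = A(θ*)x + B(θ*)u_0 + w, ŷ_{j+1} = A(θ')ŷ_j + B(θ')u_{j+1}. Then for every j with 1 ≤ j ≤ N, the trajectory difference Δx_j := ŷ_{j−1} − x̂*_j satisfies Δx_j = A(θ')^{j−1}(w + D(x, u_0)(θ* − θ̂)) + Σ_{i=1}^{j−1} A(θ')^{j−1−i} D(x̂*_i, u_i)(θ' − θ̂). -/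
/-!
Because the model is affine in `θ`, the two one-step predictions from the same state differ by
`D(x, u)(θ₁ - θ₂)`. Hence `Δ_{j+1} = A(θ') Δ_j + D(x̂_{j+1}, u_{j+1})(θ' - θ̂)` with
`Δ_0 = w + D(x, u_0)(θ* - θ̂)`, and unrolling this linear recursion gives the formula.
-/

open Matrix Finset

section

variable {R ι k l : Type*} [CommRing R] [Fintype ι] [Fintype l]

theorem sum_smul_mulVec_eq_of_mulVec (M : ι → Matrix k l R) (θ : ι → R) (x : l → R) :
    (∑ i, θ i • M i) *ᵥ x = (of fun j i => (M i *ᵥ x) j) *ᵥ θ := by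
  ext j
  rw [sum_mulVec]
  simp only [smul_mulVec, Finset.sum_apply, Pi.smul_apply, smul_eq_mul, mulVec, dotProduct,
    of_apply]
  exact Finset.sum_congr rfl fun i _ => mul_comm _ _

theorem affine_mulVec_add_mulVec_sub {m : Type*} [Fintype m]
    (A₀ : Matrix k l R) (A : ι → Matrix k l R) (B₀ : Matrix k m R) (B : ι → Matrix k m R)
    (θ θ' : ι → R) (x : l → R) (u : m → R) :
    (A₀ + ∑ i, θ i • A i) *ᵥ x + (B₀ + ∑ i, θ i • B i) *ᵥ u
        - ((A₀ + ∑ i, θ' i • A i) *ᵥ x + (B₀ + ∑ i, θ' i • B i) *ᵥ u)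
      = (of fun j i => (A i *ᵥ x) j + (B i *ᵥ u) j) *ᵥ (θ - θ') := by
  have hD : (of fun j i => (A i *ᵥ x) j + (B i *ᵥ u) j)
      = (of fun j i => (A i *ᵥ x) j) + of fun j i => (B i *ᵥ u) j := rfl
  simp only [add_mulVec, sum_smul_mulVec_eq_of_mulVec, hD, mulVec_sub]
  abel

end

/-- Discrete variation of constants (Duhamel's formula). -/
theorem eq_pow_mulVec_add_sum_of_succ_eq {R k : Type*} [Semiring R] [Fintype k] [DecidableEq k]
    (M : Matrix k k R) (e f : ℕ → k → R) (N : ℕ)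
    (he : ∀ j, j + 1 < N → e (j + 1) = M *ᵥ e j + f (j + 1)) :
    ∀ j < N, e j = (M ^ j) *ᵥ e 0 + ∑ i ∈ Ico 1 (j + 1), (M ^ (j - i)) *ᵥ f i := by
  intro j hj
  induction j with
  | zero => simp
  | succ j ih =>
    have hpow : ∀ i ∈ Ico 1 (j + 1),
        M *ᵥ (M ^ (j - i)) *ᵥ f i = (M ^ (j + 1 - i)) *ᵥ f i := by
      intro i hi
      have hij : i ≤ j := Nat.le_of_lt_succ (Finset.mem_Ico.1 hi).2
      rw [mulVec_mulVec, ← pow_succ', ← Nat.sub_add_comm hij]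
    rw [he j hj, ih (by omega), mulVec_add, mulVec_mulVec, ← pow_succ', mulVec_sum,
      Finset.sum_congr rfl hpow, Finset.sum_Ico_succ_top (by omega : 1 ≤ j + 1), Nat.sub_self,
      pow_zero, one_mulVec, add_assoc]

theorem trajectory_difference_formula_general
    {n m d : ℕ}
    (A0 : Matrix (Fin n) (Fin n) ℝ) (Ai : Fin d → Matrix (Fin n) (Fin n) ℝ)
    (B0 : Matrix (Fin n) (Fin m) ℝ) (Bi : Fin d → Matrix (Fin n) (Fin m) ℝ)
    (Am : (Fin d → ℝ) → Matrix (Fin n) (Fin n) ℝ)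
    (Bm : (Fin d → ℝ) → Matrix (Fin n) (Fin m) ℝ)
    (hAm : ∀ θ : Fin d → ℝ, Am θ = A0 + ∑ i, θ i • Ai i)
    (hBm : ∀ θ : Fin d → ℝ, Bm θ = B0 + ∑ i, θ i • Bi i)
    (Dm : (Fin n → ℝ) → (Fin m → ℝ) → Matrix (Fin n) (Fin d) ℝ)
    (hDm : ∀ x u, Dm x u = Matrix.of fun j i => (Ai i).mulVec x j + (Bi i).mulVec u j)
    (θhat θ' θstar : Fin d → ℝ)
    (x w : Fin n → ℝ)
    (N : ℕ) (u : ℕ → (Fin m → ℝ))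
    (xhat : ℕ → (Fin n → ℝ))
    (hxhat0 : xhat 0 = x)
    (hxhatS : ∀ j < N, xhat (j + 1) = (Am θhat).mulVec (xhat j) + (Bm θhat).mulVec (u j))
    (y : ℕ → (Fin n → ℝ))
    (hy0 : y 0 = (Am θstar).mulVec x + (Bm θstar).mulVec (u 0) + w)
    (hyS : ∀ j < N, y (j + 1) = (Am θ').mulVec (y j) + (Bm θ').mulVec (u (j + 1))) :
    ∀ j : ℕ, j + 1 ≤ N →
      y j - xhat (j + 1) =
        ((Am θ') ^ j).mulVec (w + (Dm x (u 0)).mulVec (θstar - θhat)) +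
          ∑ i ∈ Finset.Ico 1 (j + 1),
            ((Am θ') ^ (j - i)).mulVec ((Dm (xhat i) (u i)).mulVec (θ' - θhat)) := by
  have hD : ∀ θ₁ θ₂ v v', Am θ₁ *ᵥ v + Bm θ₁ *ᵥ v' - (Am θ₂ *ᵥ v + Bm θ₂ *ᵥ v')
      = Dm v v' *ᵥ (θ₁ - θ₂) := by
    intro θ₁ θ₂ v v'
    rw [hAm, hAm, hBm, hBm, hDm, affine_mulVec_add_mulVec_sub]
  have hstep : ∀ j, j + 1 < N → y (j + 1) - xhat (j + 1 + 1)
      = Am θ' *ᵥ (y j - xhat (j + 1)) + Dm (xhat (j + 1)) (u (j + 1)) *ᵥ (θ' - θhat) := by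
    intro j hj
    rw [hyS j (by omega), hxhatS (j + 1) hj, ← hD, mulVec_sub]
    abel
  intro j hj
  have hbase : y 0 - xhat 1 = w + Dm x (u 0) *ᵥ (θstar - θhat) := by
    rw [hy0, hxhatS 0 (by omega), hxhat0, ← hD]
    abel
  rw [eq_pow_mulVec_add_sum_of_succ_eq (Am θ') (fun j => y j - xhat (j + 1))
    (fun i => Dm (xhat i) (u i) *ᵥ (θ' - θhat)) N hstep j hj, hbase]

/-- explicit expression for the difference between the shifted
candidate trajectory and the nominal predicted trajectory. -/
theorem trajectory_difference_formula
    {n m d : ℕ} (hn : 1 ≤ n) (hm : 1 ≤ m) (hd : 1 ≤ d)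
    (A0 : Matrix (Fin n) (Fin n) ℝ) (Ai : Fin d → Matrix (Fin n) (Fin n) ℝ)
    (B0 : Matrix (Fin n) (Fin m) ℝ) (Bi : Fin d → Matrix (Fin n) (Fin m) ℝ)
    (Am : (Fin d → ℝ) → Matrix (Fin n) (Fin n) ℝ)
    (Bm : (Fin d → ℝ) → Matrix (Fin n) (Fin m) ℝ)
    (hAm : ∀ θ : Fin d → ℝ, Am θ = A0 + ∑ i, θ i • Ai i)
    (hBm : ∀ θ : Fin d → ℝ, Bm θ = B0 + ∑ i, θ i • Bi i)
    (Dm : (Fin n → ℝ) → (Fin m → ℝ) → Matrix (Fin n) (Fin d) ℝ)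
    (hDm : ∀ x u, Dm x u = Matrix.of fun j i => (Ai i).mulVec x j + (Bi i).mulVec u j)
    (θhat θ' θstar : Fin d → ℝ)
    (x w : Fin n → ℝ)
    (N : ℕ) (hN : 1 ≤ N) (u : ℕ → (Fin m → ℝ))
    (xhat : ℕ → (Fin n → ℝ))
    (hxhat0 : xhat 0 = x)
    (hxhatS : ∀ j < N, xhat (j + 1) = (Am θhat).mulVec (xhat j) + (Bm θhat).mulVec (u j))
    (y : ℕ → (Fin n → ℝ))
    (hy0 : y 0 = (Am θstar).mulVec x + (Bm θstar).mulVec (u 0) + w)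
    (hyS : ∀ j < N, y (j + 1) = (Am θ').mulVec (y j) + (Bm θ').mulVec (u (j + 1))) :
    ∀ j : ℕ, j + 1 ≤ N →
      y j - xhat (j + 1) =
        ((Am θ') ^ j).mulVec (w + (Dm x (u 0)).mulVec (θstar - θhat)) +
          ∑ i ∈ Finset.Ico 1 (j + 1),
            ((Am θ') ^ (j - i)).mulVec ((Dm (xhat i) (u i)).mulVec (θ' - θhat)) :=
  trajectory_difference_formula_general A0 Ai B0 Bi Am Bm hAm hBm Dm hDm θhat θ' θstar x w N u xhat
    hxhat0 hxhatS y hy0 hyS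
end
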